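/- arXiv:2306.00182 — 2 statements merged into one kernel-verified Lean document; each statement's English description precedes it below -/
import Mathlib

section
/- For vectors $s, r \in \mathbb{R}^d$ with all entries positive, the Hilbert projective metric $\mathsf{d}_H(s,r) = \max_{1\le i\le d}\log(s_i/r_i) - \min_{1\le i\le d}\log(s_i/r_i)$ satisfies $\mathsf{d}_H(s,r) \le (r_{i^\star}^{-1} + s_{i_\star}^{-1})\,\|r - s\|_2$, where $i^\star \in \arg\max_{1\le i\le d} s_i/r_i$ and $i_\star \in \arg\min_{1\le i\le d} s_i/r_i$. -/
/-!
Both extreme log-ratios are controlled by `log t ≤ t - 1`: at the maximiser,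
`log (s/r) ≤ (s - r)/r ≤ ‖r - s‖ / r`, and at the minimiser, after swapping the roles of
`s` and `r`, `-log (s/r) = log (r/s) ≤ ‖r - s‖ / s`, since a single coordinate is bounded
by the Euclidean norm.
-/

section ConditionallyCompleteLattice

variable {ι α : Type*} [ConditionallyCompleteLattice α] {f : ι → α}

lemma ciSup_eq_of_forall_le_apply (i₀ : ι) (h : ∀ i, f i ≤ f i₀) : ⨆ i, f i = f i₀ :=
  have : Nonempty ι := ⟨i₀⟩
  le_antisymm (ciSup_le h) (le_ciSup ⟨f i₀, Set.forall_mem_range.2 h⟩ i₀)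

lemma ciInf_eq_of_forall_apply_le (i₀ : ι) (h : ∀ i, f i₀ ≤ f i) : ⨅ i, f i = f i₀ :=
  have : Nonempty ι := ⟨i₀⟩
  le_antisymm (ciInf_le ⟨f i₀, Set.forall_mem_range.2 h⟩ i₀) (le_ciInf h)

end ConditionallyCompleteLattice

lemma Real.log_div_le_sub_div {x y : ℝ} (hx : 0 < x) (hy : 0 < y) :
    Real.log (x / y) ≤ (x - y) / y := by
  calc Real.log (x / y) ≤ x / y - 1 := Real.log_le_sub_one_of_pos (div_pos hx hy)
    _ = (x - y) / y := by rw [sub_div, div_self hy.ne']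

lemma PiLp.log_div_apply_le_inv_mul_norm_sub {p : ENNReal} [Fact (1 ≤ p)] {ι : Type*}
    [Fintype ι] {s r : PiLp p (fun _ : ι => ℝ)} {i : ι} (hs : 0 < s i) (hr : 0 < r i) :
    Real.log (s i / r i) ≤ (r i)⁻¹ * ‖r - s‖ := by
  have hcoord : s i - r i ≤ ‖r - s‖ := by
    have := PiLp.norm_apply_le (r - s) i
    rw [PiLp.sub_apply, Real.norm_eq_abs, abs_sub_comm] at this
    exact (le_abs_self _).trans this
  calc Real.log (s i / r i) ≤ (s i - r i) / r i := Real.log_div_le_sub_div hs hr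
    _ ≤ (r i)⁻¹ * ‖r - s‖ := by
      rw [div_eq_inv_mul]
      gcongr

/-- Hilbert projective metric bound: for positive vectors `s, r` in `ℝ^d`,
`d_H(s,r) = max_i log(s_i/r_i) - min_i log(s_i/r_i) ≤ (r_{i⋆}⁻¹ + s_{i⋆'}⁻¹) ‖r - s‖₂`,
where `i⋆` maximizes `s_i/r_i` and `i⋆'` minimizes it. -/
theorem hilbert_metric_euclidean_bound {d : ℕ} (s r : EuclideanSpace ℝ (Fin d))
    (hs : ∀ i, 0 < s i) (hr : ∀ i, 0 < r i)
    (istar istarlow : Fin d)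
    (hmax : ∀ i, s i / r i ≤ s istar / r istar)
    (hmin : ∀ i, s istarlow / r istarlow ≤ s i / r i) :
    (⨆ i, Real.log (s i / r i)) - (⨅ i, Real.log (s i / r i))
      ≤ ((r istar)⁻¹ + (s istarlow)⁻¹) * ‖r - s‖ := by
  have hpos : ∀ i, 0 < s i / r i := fun i => div_pos (hs i) (hr i)
  rw [ciSup_eq_of_forall_le_apply istar fun i => Real.log_le_log (hpos i) (hmax i),
    ciInf_eq_of_forall_apply_le istarlow fun i => Real.log_le_log (hpos istarlow) (hmin i)]
  have hupper := PiLp.log_div_apply_le_inv_mul_norm_sub (hs istar) (hr istar)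
  have hlower := PiLp.log_div_apply_le_inv_mul_norm_sub (hr istarlow) (hs istarlow)
  rw [← inv_div, Real.log_inv, norm_sub_rev] at hlower
  linarith
end

section
/- Let $\pi$ be a coupling of $\mu_0 \in \mathcal{P}(\mathbb{R}^{d_0})$ and $\mu_1 \in \mathcal{P}(\mathbb{R}^{d_1})$, and for $\ell > 0$ let $\pi_\ell$ be the block approximation of $\pi$ on the grid of hypercubes of side length $\ell$. Then the squared 2-Wasserstein distance satisfies $\mathsf{W}_2^2(\pi, \pi_\ell) \le (d_0 + d_1)\ell^2$; in particular $\pi_\ell$ converges weakly to $\pi$ as $\ell \downarrow 0$. -/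
open MeasureTheory ENNReal

/-- The half-open hypercube of side `ℓ` indexed by `q ∈ ℤ^d`. -/
def gridCube {d : ℕ} (ℓ : ℝ) (q : Fin d → ℤ) : Set (EuclideanSpace ℝ (Fin d)) :=
  {x | ∀ m, (q m : ℝ) * ℓ ≤ x m ∧ x m < ((q m : ℝ) + 1) * ℓ}

/-- The block approximation of a coupling `π` of `(μ0, μ1)` at scale `ℓ`:
`π_ℓ = ∑_{(q,q')} (π(H_q × H_{q'}) / (μ0(H_q) μ1(H_{q'}))) (μ0|_{H_q} ⊗ μ1|_{H_{q'}})`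
(with `0/0 = 0`). -/
noncomputable def blockApprox {d0 d1 : ℕ}
    (μ0 : Measure (EuclideanSpace ℝ (Fin d0))) (μ1 : Measure (EuclideanSpace ℝ (Fin d1)))
    (π : Measure (EuclideanSpace ℝ (Fin d0) × EuclideanSpace ℝ (Fin d1))) (ℓ : ℝ) :
    Measure (EuclideanSpace ℝ (Fin d0) × EuclideanSpace ℝ (Fin d1)) :=
  Measure.sum fun qq : (Fin d0 → ℤ) × (Fin d1 → ℤ) =>
    (π (gridCube ℓ qq.1 ×ˢ gridCube ℓ qq.2) / (μ0 (gridCube ℓ qq.1) * μ1 (gridCube ℓ qq.2)))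
      • ((μ0.restrict (gridCube ℓ qq.1)).prod (μ1.restrict (gridCube ℓ qq.2)))

/-- Squared `2`-Wasserstein distance between measures on the product space, with the
(squared) Euclidean cost `‖x - x'‖² + ‖y - y'‖²`. -/
noncomputable def W2sq {d0 d1 : ℕ}
    (μ ν : Measure (EuclideanSpace ℝ (Fin d0) × EuclideanSpace ℝ (Fin d1))) : ℝ≥0∞ :=
  ⨅ (γ : Measure ((EuclideanSpace ℝ (Fin d0) × EuclideanSpace ℝ (Fin d1))
      × (EuclideanSpace ℝ (Fin d0) × EuclideanSpace ℝ (Fin d1))))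
    (_ : γ.map Prod.fst = μ) (_ : γ.map Prod.snd = ν),
    ∫⁻ p, ENNReal.ofReal (‖p.1.1 - p.2.1‖ ^ 2 + ‖p.1.2 - p.2.2‖ ^ 2) ∂γ

/-!
On a block `B = H_q × H_q'` the block approximation carries the mass `π B`, spread out
according to the normalised product measure `(μ0 ⊗ μ1)[|B]`; the marginal conditions make `π`
vanish on the blocks that are null for `μ0 ⊗ μ1`. Coupling `π|_B` with `(μ0 ⊗ μ1)[|B]` block by
block therefore gives a coupling of `π` and `π_ℓ` that only pairs points of a common block, hence
points at squared distance at most `(d0 + d1) ℓ²`. This bounds `W₂²(π, π_ℓ)`, and also the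
Lévy–Prokhorov distance between `π` and `π_ℓ`, which controls weak convergence.
-/

open scoped ProbabilityTheory BoundedContinuousFunction
open Set Filter Topology

namespace MeasureTheory

section Partition

variable {α ι : Type*} [MeasurableSpace α]

noncomputable def Measure.partitionApprox (π ρ : Measure α) (B : ι → Set α) : Measure α :=
  Measure.sum fun i => π (B i) • ρ[|B i]

noncomputable def Measure.partitionCoupling (π ρ : Measure α) (B : ι → Set α) :
    Measure (α × α) :=
  Measure.sum fun i => (π.restrict (B i)).prod ρ[|B i]

variable {π ρ : Measure α} {B : ι → Set α}

lemma Measure.map_snd_partitionCoupling :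
    (π.partitionCoupling ρ B).map Prod.snd = π.partitionApprox ρ B := by
  simp [partitionCoupling, partitionApprox, map_sum measurable_snd.aemeasurable]

lemma Measure.map_fst_partitionCoupling [Countable ι] [IsFiniteMeasure ρ]
    (hB : ∀ i, MeasurableSet (B i)) (hdisj : Pairwise (Function.onFun Disjoint B))
    (hcover : ⋃ i, B i = univ) (hπρ : ∀ i, ρ (B i) = 0 → π (B i) = 0) :
    (π.partitionCoupling ρ B).map Prod.fst = π := by
  have hcell (i : ι) : ρ[|B i] univ • π.restrict (B i) = π.restrict (B i) := by
    by_cases h : ρ (B i) = 0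
    · simp [restrict_eq_zero.mpr (hπρ i h)]
    · have := ProbabilityTheory.cond_isProbabilityMeasure (μ := ρ) h
      simp
  simp_rw [partitionCoupling, map_sum measurable_fst.aemeasurable, map_fst_prod, hcell]
  rw [← restrict_iUnion hdisj hB, hcover, restrict_univ]

lemma Measure.ae_partitionCoupling_mem [Countable ι]
    (hB : ∀ i, MeasurableSet (B i)) :
    ∀ᵐ z ∂π.partitionCoupling ρ B, ∃ i, z.1 ∈ B i ∧ z.2 ∈ B i := by
  refine ae_sum_iff.mpr fun i => ?_
  filter_upwards [quasiMeasurePreserving_fst.ae (ae_restrict_mem (hB i)),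
    quasiMeasurePreserving_snd.ae (ProbabilityTheory.ae_cond_mem (hB i))] with z h1 h2
  exact ⟨i, h1, h2⟩

end Partition

section Marginals

variable {α β : Type*} [MeasurableSpace α] [MeasurableSpace β]

lemma measure_prod_eq_zero_of_marginals {μ : Measure α} {ν : Measure β} [SFinite ν]
    {π : Measure (α × β)} (hπμ : π.map Prod.fst = μ) (hπν : π.map Prod.snd = ν) {s : Set α}
    {t : Set β} (hs : MeasurableSet s) (ht : MeasurableSet t) (h : (μ.prod ν) (s ×ˢ t) = 0) :
    π (s ×ˢ t) = 0 := by
  rcases mul_eq_zero.mp ((Measure.prod_prod s t).symm.trans h) with h | h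
  · rw [← hπμ, Measure.map_apply measurable_fst hs] at h
    exact measure_mono_null (fun _ hp => hp.1) h
  · rw [← hπν, Measure.map_apply measurable_snd ht] at h
    exact measure_mono_null (fun _ hp => hp.2) h

lemma isProbabilityMeasure_of_map_fst {μ : Measure α} [IsProbabilityMeasure μ]
    {γ : Measure (α × β)} (hγμ : γ.map Prod.fst = μ) : IsProbabilityMeasure γ :=
  have : IsProbabilityMeasure (γ.map Prod.fst) := hγμ ▸ ‹_›
  Measure.isProbabilityMeasure_of_map Prod.fst

end Marginals

section LevyProkhorov

variable {Ω : Type*} [PseudoMetricSpace Ω] [MeasurableSpace Ω] [OpensMeasurableSpace Ω]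

lemma levyProkhorovDist_le_of_coupling {μ ν : Measure Ω} [IsProbabilityMeasure μ]
    [IsProbabilityMeasure ν] {γ : Measure (Ω × Ω)} (hγμ : γ.map Prod.fst = μ)
    (hγν : γ.map Prod.snd = ν) {δ : ℝ} (hδ : 0 ≤ δ) (hdist : ∀ᵐ z ∂γ, dist z.1 z.2 ≤ δ) :
    levyProkhorovDist μ ν ≤ δ := by
  refine levyProkhorovDist_le_of_forall_le μ ν hδ fun ε A hε hA => ?_
  have hmove : ∀ᵐ z ∂γ, z.1 ∈ A → z.2 ∈ Metric.thickening ε A := by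
    filter_upwards [hdist] with z hz hz1
    exact Metric.mem_thickening_iff.mpr ⟨z.1, hz1, by rw [dist_comm]; linarith⟩
  calc μ A = γ (Prod.fst ⁻¹' A) := by rw [← hγμ, Measure.map_apply measurable_fst hA]
    _ ≤ γ (Prod.snd ⁻¹' Metric.thickening ε A) := measure_mono_ae hmove
    _ = ν (Metric.thickening ε A) := by
      rw [← hγν, Measure.map_apply measurable_snd Metric.isOpen_thickening.measurableSet]
    _ ≤ ν (Metric.thickening ε A) + ENNReal.ofReal ε := le_self_add

lemma tendsto_integral_of_levyProkhorovDist_le {ι : Type*} {l : Filter ι} {μ : Measure Ω}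
    [IsProbabilityMeasure μ] {μs : ι → Measure Ω} {δ : ι → ℝ} (hδ : Tendsto δ l (𝓝 0))
    (hμs : ∀ᶠ i in l, IsProbabilityMeasure (μs i) ∧ levyProkhorovDist μ (μs i) ≤ δ i)
    (f : Ω →ᵇ ℝ) : Tendsto (fun i => ∫ x, f x ∂μs i) l (𝓝 (∫ x, f x ∂μ)) := by
  classical
  let P : ι → ProbabilityMeasure Ω := fun i =>
    if h : IsProbabilityMeasure (μs i) then ⟨μs i, h⟩ else ⟨μ, inferInstance⟩
  have hP : ∀ᶠ i in l, (P i : Measure Ω) = μs i := by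
    filter_upwards [hμs] with i hi
    simp [P, hi.1]
  have hPlim : Tendsto P l (𝓝 ⟨μ, inferInstance⟩) := by
    refine LevyProkhorov.continuous_toMeasure_probabilityMeasure.continuousAt.tendsto.comp
      (f := fun i => LevyProkhorov.ofMeasure (P i)) (tendsto_iff_dist_tendsto_zero.mpr ?_)
    refine squeeze_zero' (.of_forall fun _ => dist_nonneg) ?_ hδ
    filter_upwards [hμs, hP] with i hi hPi
    rw [LevyProkhorov.dist_probabilityMeasure_def, levyProkhorovDist_comm]
    simpa [hPi] using hi.2
  refine (ProbabilityMeasure.tendsto_iff_forall_integral_tendsto.mp hPlim f).congr' ?_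
  filter_upwards [hP] with i hi
  rw [hi]

lemma tendsto_integral_of_coupling {ι : Type*} {l : Filter ι} {μ : Measure Ω}
    [IsProbabilityMeasure μ] {μs : ι → Measure Ω} {δ : ι → ℝ} (hδ : Tendsto δ l (𝓝 0))
    (hδ_nonneg : ∀ i, 0 ≤ δ i)
    (hγ : ∀ᶠ i in l, ∃ γ : Measure (Ω × Ω), γ.map Prod.fst = μ ∧ γ.map Prod.snd = μs i ∧
      ∀ᵐ z ∂γ, dist z.1 z.2 ≤ δ i)
    (f : Ω →ᵇ ℝ) : Tendsto (fun i => ∫ x, f x ∂μs i) l (𝓝 (∫ x, f x ∂μ)) := by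
  refine tendsto_integral_of_levyProkhorovDist_le hδ ?_ f
  filter_upwards [hγ] with i ⟨γ, hγμ, hγν, hdist⟩
  have := isProbabilityMeasure_of_map_fst hγμ
  have : IsProbabilityMeasure (μs i) :=
    hγν ▸ Measure.isProbabilityMeasure_map measurable_snd.aemeasurable
  exact ⟨this, levyProkhorovDist_le_of_coupling hγμ hγν (hδ_nonneg i) hdist⟩

end LevyProkhorov

end MeasureTheory

lemma dist_sq_le_norm_sub_sq_add {E F : Type*} [SeminormedAddCommGroup E]
    [SeminormedAddCommGroup F] (p p' : E × F) :
    dist p p' ^ 2 ≤ ‖p.1 - p'.1‖ ^ 2 + ‖p.2 - p'.2‖ ^ 2 := by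
  rw [Prod.dist_eq, dist_eq_norm, dist_eq_norm]
  rcases max_cases ‖p.1 - p'.1‖ ‖p.2 - p'.2‖ with ⟨h, -⟩ | ⟨h, -⟩ <;>
    rw [h] <;> nlinarith [sq_nonneg ‖p.1 - p'.1‖, sq_nonneg ‖p.2 - p'.2‖]

noncomputable def gridIndex {d : ℕ} (ℓ : ℝ) (x : EuclideanSpace ℝ (Fin d)) : Fin d → ℤ :=
  fun m => ⌊x m / ℓ⌋

section Grid

variable {d : ℕ} {ℓ : ℝ}

lemma mem_gridCube_iff (hℓ : 0 < ℓ) {x : EuclideanSpace ℝ (Fin d)} {q : Fin d → ℤ} :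
    x ∈ gridCube ℓ q ↔ gridIndex ℓ x = q := by
  simp only [gridCube, mem_ofPred_eq, gridIndex, funext_iff, Int.floor_eq_iff, le_div_iff₀ hℓ,
    div_lt_iff₀ hℓ]

lemma measurableSet_gridCube (ℓ : ℝ) (q : Fin d → ℤ) : MeasurableSet (gridCube ℓ q) := by
  have hcoord (m : Fin d) : Measurable fun x : EuclideanSpace ℝ (Fin d) => x m :=
    (measurable_pi_apply m).comp (WithLp.measurable_ofLp _ _)
  simp only [gridCube, ofPred_forall]
  exact .iInter fun m => (measurableSet_le measurable_const (hcoord m)).inter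
    (measurableSet_lt (hcoord m) measurable_const)

lemma norm_sub_sq_le_of_mem_gridCube {q : Fin d → ℤ} {x y : EuclideanSpace ℝ (Fin d)}
    (hx : x ∈ gridCube ℓ q) (hy : y ∈ gridCube ℓ q) : ‖x - y‖ ^ 2 ≤ d * ℓ ^ 2 := by
  have hcoord (m : Fin d) : ‖(x - y) m‖ ^ 2 ≤ ℓ ^ 2 := by
    obtain ⟨⟨hx1, hx2⟩, hy1, hy2⟩ := And.intro (hx m) (hy m)
    rw [PiLp.sub_apply, Real.norm_eq_abs, sq_abs]
    nlinarith
  rw [EuclideanSpace.norm_eq, Real.sq_sqrt (by positivity)]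
  simpa using Finset.sum_le_sum fun m (_ : m ∈ Finset.univ) => hcoord m

end Grid

section Blocks

variable {d0 d1 : ℕ} {ℓ : ℝ}

def gridBlock (ℓ : ℝ) (qq : (Fin d0 → ℤ) × (Fin d1 → ℤ)) :
    Set (EuclideanSpace ℝ (Fin d0) × EuclideanSpace ℝ (Fin d1)) :=
  gridCube ℓ qq.1 ×ˢ gridCube ℓ qq.2

lemma mem_gridBlock_iff (hℓ : 0 < ℓ) {p : EuclideanSpace ℝ (Fin d0) × EuclideanSpace ℝ (Fin d1)}
    {qq : (Fin d0 → ℤ) × (Fin d1 → ℤ)} :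
    p ∈ gridBlock ℓ qq ↔ (gridIndex ℓ p.1, gridIndex ℓ p.2) = qq := by
  simp only [gridBlock, mem_prod, mem_gridCube_iff hℓ, Prod.ext_iff]

lemma measurableSet_gridBlock (ℓ : ℝ) (qq : (Fin d0 → ℤ) × (Fin d1 → ℤ)) :
    MeasurableSet (gridBlock ℓ qq) :=
  (measurableSet_gridCube ℓ qq.1).prod (measurableSet_gridCube ℓ qq.2)

lemma pairwise_disjoint_gridBlock (hℓ : 0 < ℓ) :
    Pairwise (Function.onFun Disjoint (gridBlock (d0 := d0) (d1 := d1) ℓ)) :=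
  fun _ _ hne => disjoint_left.mpr fun _ h h' =>
    hne (((mem_gridBlock_iff hℓ).mp h).symm.trans ((mem_gridBlock_iff hℓ).mp h'))

lemma iUnion_gridBlock (hℓ : 0 < ℓ) :
    ⋃ qq, gridBlock (d0 := d0) (d1 := d1) ℓ qq = univ :=
  eq_univ_of_forall fun _ => mem_iUnion.mpr ⟨_, (mem_gridBlock_iff hℓ).mpr rfl⟩

lemma cost_le_of_mem_gridBlock {qq : (Fin d0 → ℤ) × (Fin d1 → ℤ)}
    {p p' : EuclideanSpace ℝ (Fin d0) × EuclideanSpace ℝ (Fin d1)}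
    (hp : p ∈ gridBlock ℓ qq) (hp' : p' ∈ gridBlock ℓ qq) :
    ‖p.1 - p'.1‖ ^ 2 + ‖p.2 - p'.2‖ ^ 2 ≤ (d0 + d1) * ℓ ^ 2 := by
  linarith [norm_sub_sq_le_of_mem_gridCube hp.1 hp'.1, norm_sub_sq_le_of_mem_gridCube hp.2 hp'.2]

lemma blockApprox_eq_partitionApprox (μ0 : Measure (EuclideanSpace ℝ (Fin d0)))
    (μ1 : Measure (EuclideanSpace ℝ (Fin d1))) [SFinite μ0] [SFinite μ1]
    (π : Measure (EuclideanSpace ℝ (Fin d0) × EuclideanSpace ℝ (Fin d1))) (ℓ : ℝ) :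
    blockApprox μ0 μ1 π ℓ = π.partitionApprox (μ0.prod μ1) (gridBlock ℓ) := by
  refine congrArg Measure.sum (funext fun qq => ?_)
  -- in `ℝ≥0∞`, `a / b = a * b⁻¹` also for `b = 0`, so the `0/0` convention needs no case split
  rw [ProbabilityTheory.cond, smul_smul, ← div_eq_mul_inv, gridBlock, Measure.prod_prod,
    Measure.prod_restrict]

end Blocks

section Transport

variable {d0 d1 : ℕ}

lemma W2sq_le_of_coupling {μ ν : Measure (EuclideanSpace ℝ (Fin d0) × EuclideanSpace ℝ (Fin d1))}
    [IsProbabilityMeasure μ]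
    {γ : Measure ((EuclideanSpace ℝ (Fin d0) × EuclideanSpace ℝ (Fin d1)) ×
      (EuclideanSpace ℝ (Fin d0) × EuclideanSpace ℝ (Fin d1)))}
    (hγμ : γ.map Prod.fst = μ) (hγν : γ.map Prod.snd = ν) {c : ℝ}
    (hcost : ∀ᵐ z ∂γ, ‖z.1.1 - z.2.1‖ ^ 2 + ‖z.1.2 - z.2.2‖ ^ 2 ≤ c) :
    W2sq μ ν ≤ ENNReal.ofReal c := by
  have := isProbabilityMeasure_of_map_fst hγμ
  calc W2sq μ ν ≤ ∫⁻ z, ENNReal.ofReal (‖z.1.1 - z.2.1‖ ^ 2 + ‖z.1.2 - z.2.2‖ ^ 2) ∂γ :=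
        (iInf_le _ γ).trans (iInf₂_le hγμ hγν)
    _ ≤ ∫⁻ _, ENNReal.ofReal c ∂γ := lintegral_mono_ae (hcost.mono fun _ h => ofReal_le_ofReal h)
    _ = ENNReal.ofReal c := by simp

lemma exists_coupling_blockApprox {μ0 : Measure (EuclideanSpace ℝ (Fin d0))}
    {μ1 : Measure (EuclideanSpace ℝ (Fin d1))} [IsFiniteMeasure μ0] [IsFiniteMeasure μ1]
    {π : Measure (EuclideanSpace ℝ (Fin d0) × EuclideanSpace ℝ (Fin d1))}
    (hπ0 : π.map Prod.fst = μ0) (hπ1 : π.map Prod.snd = μ1) {ℓ : ℝ} (hℓ : 0 < ℓ) :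
    ∃ γ : Measure ((EuclideanSpace ℝ (Fin d0) × EuclideanSpace ℝ (Fin d1)) ×
        (EuclideanSpace ℝ (Fin d0) × EuclideanSpace ℝ (Fin d1))),
      γ.map Prod.fst = π ∧ γ.map Prod.snd = blockApprox μ0 μ1 π ℓ ∧
        ∀ᵐ z ∂γ, ‖z.1.1 - z.2.1‖ ^ 2 + ‖z.1.2 - z.2.2‖ ^ 2 ≤ (d0 + d1) * ℓ ^ 2 := by
  refine ⟨π.partitionCoupling (μ0.prod μ1) (gridBlock ℓ),
    Measure.map_fst_partitionCoupling (measurableSet_gridBlock ℓ) (pairwise_disjoint_gridBlock hℓ)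
      (iUnion_gridBlock hℓ) fun qq => measure_prod_eq_zero_of_marginals hπ0 hπ1
        (measurableSet_gridCube ℓ qq.1) (measurableSet_gridCube ℓ qq.2),
    by rw [blockApprox_eq_partitionApprox, Measure.map_snd_partitionCoupling], ?_⟩
  filter_upwards [Measure.ae_partitionCoupling_mem (measurableSet_gridBlock ℓ)] with z ⟨_, h1, h2⟩
  exact cost_le_of_mem_gridBlock h1 h2

end Transport

/-- The block approximation satisfies `W₂²(π, π_ℓ) ≤ (d0 + d1) ℓ²`; in particular `π_ℓ`
converges weakly to `π` as `ℓ ↓ 0`. -/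
theorem blockApprox_W2_bound {d0 d1 : ℕ}
    (μ0 : Measure (EuclideanSpace ℝ (Fin d0))) (μ1 : Measure (EuclideanSpace ℝ (Fin d1)))
    [IsProbabilityMeasure μ0] [IsProbabilityMeasure μ1]
    (π : Measure (EuclideanSpace ℝ (Fin d0) × EuclideanSpace ℝ (Fin d1)))
    [IsProbabilityMeasure π]
    (hπ0 : π.map Prod.fst = μ0) (hπ1 : π.map Prod.snd = μ1) :
    (∀ ℓ : ℝ, 0 < ℓ →
        W2sq π (blockApprox μ0 μ1 π ℓ) ≤ ENNReal.ofReal ((d0 + d1) * ℓ ^ 2))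
      ∧ ∀ f : EuclideanSpace ℝ (Fin d0) × EuclideanSpace ℝ (Fin d1) → ℝ,
          Continuous f → (∃ Cb : ℝ, ∀ p, |f p| ≤ Cb) →
          Filter.Tendsto (fun ℓ : ℝ => ∫ p, f p ∂(blockApprox μ0 μ1 π ℓ))
            (nhdsWithin 0 (Set.Ioi 0)) (nhds (∫ p, f p ∂π)) := by
  have hcoupling (ℓ : ℝ) (hℓ : 0 < ℓ) := exists_coupling_blockApprox hπ0 hπ1 hℓ
  refine ⟨fun ℓ hℓ => ?_, fun f hf ⟨Cb, hCb⟩ => ?_⟩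
  · obtain ⟨γ, hγπ, hγ, hcost⟩ := hcoupling ℓ hℓ
    exact W2sq_le_of_coupling hγπ hγ hcost
  · have hδ : Tendsto (fun ℓ : ℝ => √((d0 + d1) * ℓ ^ 2)) (𝓝[>] 0) (𝓝 0) := by
      refine tendsto_nhdsWithin_of_tendsto_nhds ?_
      simpa using (Continuous.tendsto (by fun_prop) 0 :
        Tendsto (fun ℓ : ℝ => √((d0 + d1) * ℓ ^ 2)) (𝓝 0) _)
    refine tendsto_integral_of_coupling hδ (fun _ => Real.sqrt_nonneg _) ?_
      (.ofNormedAddCommGroup f hf Cb hCb)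
    filter_upwards [self_mem_nhdsWithin] with ℓ hℓ
    obtain ⟨γ, hγπ, hγ, hcost⟩ := hcoupling ℓ hℓ
    refine ⟨γ, hγπ, hγ, ?_⟩
    filter_upwards [hcost] with z hz
    exact Real.le_sqrt_of_sq_le ((dist_sq_le_norm_sub_sq_add z.1 z.2).trans hz)
end
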